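/- Let Λ be a measure on (0,∞) with Λ([x,∞)) < ∞ for every x > 0 and ∫_{(0,∞)} x² dΛ(x) < ∞, and define Λ⁻¹(u) = inf{x > 0 : Λ([x,∞)) < u} for u > 0. Let (Eᵢ)_{i∈ℕ} be i.i.d. exponential random variables with rate 1 and set Γ_n = E₁ + ⋯ + E_n (the arrival times of a standard Poisson process). Then Σ_{n=1}^∞ (Λ⁻¹(Γ_n))² < ∞ almost surely. -/

import Mathlib

/-!
By the layer-cake formula, `∫₀^∞ Λ⁻¹(u)² du ≤ ∫ x² dΛ < ∞`: for `t > 0` the set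
`{u > 0 : Λ⁻¹(u) > t}` is contained in `(0, Λ([t, ∞))]`. Since `Λ⁻¹` is antitone, this integral
dominates `c · ∑ₙ Λ⁻¹((n + 1) c)²` for every `c > 0`. By the strong law of large numbers
`Γₙ / n → 1` almost surely, so eventually `Γₙ ≥ n / 2`, and `∑ₙ Λ⁻¹(Γₙ)²` is dominated by that
convergent series.
-/

open MeasureTheory ProbabilityTheory Set Finset

/-- The generalized inverse of the tail of a measure `Λ` on `(0, ∞)`:
`Λ⁻¹(u) = inf {x > 0 : Λ([x, ∞)) < u}`. -/
noncomputable def levyTailInv (Λ : Measure ℝ) (u : ℝ) : ℝ :=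
  sInf {x : ℝ | 0 < x ∧ Λ (Set.Ici x) < ENNReal.ofReal u}

open Filter Function
open scoped ENNReal Topology

theorem tendsto_measure_Ici_atTop_nhds_zero {α : Type*} [LinearOrder α] [NoMaxOrder α]
    [TopologicalSpace α] [OrderClosedTopology α] [MeasurableSpace α] [OpensMeasurableSpace α]
    [(atTop : Filter α).IsCountablyGenerated] (μ : Measure α) (h : ∃ x, μ (Ici x) ≠ ∞) :
    Tendsto (fun x => μ (Ici x)) atTop (𝓝 0) := by
  have hempty : ⋂ x : α, Ici x = ∅ :=
    iInter_eq_empty_iff.2 fun x => (exists_gt x).imp fun _ hy => not_le.2 hy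
  simpa [hempty, Function.comp_def] using
    tendsto_measure_iInter_atTop (fun _ => measurableSet_Ici.nullMeasurableSet) antitone_Ici h

theorem tsum_mul_le_setLIntegral_Ioi_of_antitoneOn {f : ℝ → ℝ≥0∞} (hf : AntitoneOn f (Ioi 0))
    {c : ℝ} (hc : 0 < c) :
    (∑' n : ℕ, f ((n + 1) * c)) * ENNReal.ofReal c ≤ ∫⁻ x in Ioi 0, f x := by
  have hdisj : Pairwise (Disjoint on fun n : ℕ => Ioc (n * c) ((n + 1) * c)) := by
    simpa using (Nat.mono_cast.mul_const hc.le).pairwise_disjoint_on_Ioc_succ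
  calc (∑' n : ℕ, f ((n + 1) * c)) * ENNReal.ofReal c
      = ∑' n : ℕ, ∫⁻ _ in Ioc (n * c) ((n + 1) * c), f ((n + 1) * c) := by
        rw [← ENNReal.tsum_mul_right]
        congr with n
        rw [setLIntegral_const, Real.volume_Ioc]
        ring_nf
    _ ≤ ∑' n : ℕ, ∫⁻ x in Ioc (n * c) ((n + 1) * c), f x :=
        ENNReal.tsum_le_tsum fun n => setLIntegral_mono' measurableSet_Ioc fun x hx =>
          hf ((by positivity : (0 : ℝ) ≤ n * c).trans_lt hx.1)
            (show (0 : ℝ) < (n + 1) * c by positivity) hx.2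
    _ = ∫⁻ x in ⋃ n : ℕ, Ioc (n * c) ((n + 1) * c), f x :=
        (lintegral_iUnion (fun _ => measurableSet_Ioc) hdisj _).symm
    _ ≤ ∫⁻ x in Ioi 0, f x :=
        lintegral_mono_set <| iUnion_subset fun n =>
          Ioc_subset_Ioi_self.trans (Ioi_subset_Ioi (by positivity))

theorem eventually_mul_le_of_tendsto_div {s : ℕ → ℝ} {m c : ℝ}
    (hs : Tendsto (fun n : ℕ => s n / n) atTop (𝓝 m)) (hc : c < m) :
    ∀ᶠ n : ℕ in atTop, n * c ≤ s n := by
  filter_upwards [hs.eventually (eventually_gt_nhds hc), eventually_gt_atTop 0] with n hn hpos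
  rw [lt_div_iff₀ (by exact_mod_cast hpos)] at hn
  linarith

section levyTailInv

variable (Λ : Measure ℝ)

theorem levyTailInv_nonneg (u : ℝ) : 0 ≤ levyTailInv Λ u :=
  Real.sInf_nonneg fun _ hx => hx.1.le

theorem exists_measure_Ici_lt (htail : ∀ x : ℝ, 0 < x → Λ (Ici x) < ⊤) {u : ℝ} (hu : 0 < u) :
    ∃ x, 0 < x ∧ Λ (Ici x) < ENNReal.ofReal u := by
  have hfin : ∃ x, Λ (Ici x) ≠ ∞ := ⟨1, (htail 1 one_pos).ne⟩
  have hlim := tendsto_measure_Ici_atTop_nhds_zero Λ hfin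
  exact ((eventually_gt_atTop 0).and
    (hlim.eventually (gt_mem_nhds (ENNReal.ofReal_pos.2 hu)))).exists

theorem levyTailInv_antitoneOn (htail : ∀ x : ℝ, 0 < x → Λ (Ici x) < ⊤) :
    AntitoneOn (levyTailInv Λ) (Ioi 0) := fun _ hu _ _ huv =>
  csInf_le_csInf ⟨0, fun _ hx => hx.1.le⟩ (exists_measure_Ici_lt Λ htail hu)
    fun _ hx => ⟨hx.1, hx.2.trans_le (ENNReal.ofReal_le_ofReal huv)⟩

theorem levyTailInv_le_of_measure_Ici_lt {u t : ℝ} (ht : 0 < t)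
    (h : Λ (Ici t) < ENNReal.ofReal u) : levyTailInv Λ u ≤ t :=
  csInf_le ⟨0, fun _ hx => hx.1.le⟩ ⟨ht, h⟩

theorem ofReal_le_measure_Ici_of_lt_levyTailInv {u t : ℝ} (ht : 0 < t)
    (h : t < levyTailInv Λ u) : ENNReal.ofReal u ≤ Λ (Ici t) :=
  not_lt.1 fun hlt => (levyTailInv_le_of_measure_Ici_lt Λ ht hlt).not_gt h

theorem volume_setOf_lt_levyTailInv_inter_Ioi_le {t : ℝ} (ht : 0 < t) :
    volume ({u | t < levyTailInv Λ u} ∩ Ioi 0) ≤ Λ (Ici t) := by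
  rcases eq_top_or_lt_top (Λ (Ici t)) with htop | hfin
  · simp [htop]
  calc volume ({u | t < levyTailInv Λ u} ∩ Ioi 0)
      ≤ volume (Ioc 0 (Λ (Ici t)).toReal) := measure_mono fun u ⟨hu, hu0⟩ =>
        ⟨hu0, (ENNReal.ofReal_le_iff_le_toReal hfin.ne).1
          (ofReal_le_measure_Ici_of_lt_levyTailInv Λ ht hu)⟩
    _ = Λ (Ici t) := by rw [Real.volume_Ioc, sub_zero, ENNReal.ofReal_toReal hfin.ne]

theorem lintegral_sq_levyTailInv_le (htail : ∀ x : ℝ, 0 < x → Λ (Ici x) < ⊤) :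
    ∫⁻ u in Ioi 0, ENNReal.ofReal (levyTailInv Λ u ^ 2)
      ≤ ∫⁻ x in Ioi 0, ENNReal.ofReal (x ^ 2) ∂Λ := by
  rw [lintegral_eq_lintegral_meas_lt _ (ae_of_all _ fun u => sq_nonneg _)
      ((aemeasurable_restrict_of_antitoneOn measurableSet_Ioi
        (levyTailInv_antitoneOn Λ htail)).pow_const 2),
    lintegral_eq_lintegral_meas_le _ (ae_of_all _ sq_nonneg) (by fun_prop)]
  refine setLIntegral_mono' measurableSet_Ioi fun s (hs : 0 < s) => ?_
  have hsqrt : 0 < √s := Real.sqrt_pos.2 hs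
  rw [Measure.restrict_apply' measurableSet_Ioi, Measure.restrict_apply' measurableSet_Ioi]
  calc volume ({u | s < levyTailInv Λ u ^ 2} ∩ Ioi 0)
      ≤ volume ({u | √s < levyTailInv Λ u} ∩ Ioi 0) :=
        measure_mono <| inter_subset_inter_left _ fun u (hu : s < _) => by
          simpa [Real.sqrt_sq (levyTailInv_nonneg Λ u)] using Real.sqrt_lt_sqrt hs.le hu
    _ ≤ Λ (Ici √s) := volume_setOf_lt_levyTailInv_inter_Ioi_le Λ hsqrt
    _ ≤ Λ ({x | s ≤ x ^ 2} ∩ Ioi 0) := measure_mono fun x (hx : √s ≤ x) =>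
        ⟨(Real.sqrt_le_left (hsqrt.le.trans hx)).1 hx, hsqrt.trans_le hx⟩

theorem summable_sq_levyTailInv_mul (htail : ∀ x : ℝ, 0 < x → Λ (Ici x) < ⊤)
    (hmom : ∫⁻ x in Ioi (0 : ℝ), ENNReal.ofReal (x ^ 2) ∂Λ ≠ ⊤) {c : ℝ} (hc : 0 < c) :
    Summable fun n : ℕ => levyTailInv Λ ((n + 1) * c) ^ 2 := by
  have hanti : AntitoneOn (fun u => ENNReal.ofReal (levyTailInv Λ u ^ 2)) (Ioi 0) :=
    fun u hu v hv huv => ENNReal.ofReal_le_ofReal <|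
      pow_le_pow_left₀ (levyTailInv_nonneg Λ v) (levyTailInv_antitoneOn Λ htail hu hv huv) 2
  have hfin : ∑' n : ℕ, ENNReal.ofReal (levyTailInv Λ ((n + 1) * c) ^ 2) ≠ ∞ :=
    (ENNReal.lt_top_of_mul_ne_top_left (ne_top_of_le_ne_top hmom
      ((tsum_mul_le_setLIntegral_Ioi_of_antitoneOn hanti hc).trans
        (lintegral_sq_levyTailInv_le Λ htail))) (ENNReal.ofReal_pos.2 hc).ne').ne
  exact (ENNReal.summable_toReal hfin).congr fun n => ENNReal.toReal_ofReal (sq_nonneg _)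

theorem summable_sq_levyTailInv_sum_range_of_tendsto (htail : ∀ x : ℝ, 0 < x → Λ (Ici x) < ⊤)
    (hmom : ∫⁻ x in Ioi (0 : ℝ), ENNReal.ofReal (x ^ 2) ∂Λ ≠ ⊤) {x : ℕ → ℝ} {m : ℝ}
    (hm : 0 < m) (hx : Tendsto (fun n : ℕ => (∑ i ∈ range n, x i) / n) atTop (𝓝 m)) :
    Summable fun n : ℕ => levyTailInv Λ (∑ i ∈ range (n + 1), x i) ^ 2 := by
  have hlow : ∀ᶠ n : ℕ in atTop, (n + 1 : ℝ) * (m / 2) ≤ ∑ i ∈ range (n + 1), x i := by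
    simpa using (tendsto_add_atTop_nat 1).eventually
      (eventually_mul_le_of_tendsto_div hx (half_lt_self hm))
  refine .of_norm_bounded_eventually_nat (summable_sq_levyTailInv_mul Λ htail hmom (half_pos hm)) ?_
  filter_upwards [hlow] with n hn
  have hpos : 0 < (n + 1 : ℝ) * (m / 2) := by positivity
  rw [Real.norm_of_nonneg (sq_nonneg _)]
  exact pow_le_pow_left₀ (levyTailInv_nonneg Λ _)
    (levyTailInv_antitoneOn Λ htail hpos (hpos.trans_le hn) hn) 2

end levyTailInv

theorem ae_nonneg_expMeasure (r : ℝ) : ∀ᵐ x ∂expMeasure r, 0 ≤ x := by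
  have hneg : expMeasure r (Iio 0) = 0 := by
    rw [expMeasure, gammaMeasure, withDensity_apply _ measurableSet_Iio]
    exact lintegral_gammaPDF_of_nonpos le_rfl
  exact ae_iff.2 (measure_mono_null (fun x (hx : ¬ 0 ≤ x) => not_le.1 hx) hneg)

theorem lintegral_ofReal_expMeasure_one : ∫⁻ x, ENNReal.ofReal x ∂expMeasure 1 = 1 := by
  have hpdf : Measurable (gammaPDF 1 1) := (measurable_gammaPDFReal 1 1).ennreal_ofReal
  -- The factor `ofReal x` kills the integrand on `(-∞, 0]`; on `(0, ∞)` it is the `Γ(2)` integrand.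
  rw [expMeasure, gammaMeasure, lintegral_withDensity_eq_lintegral_mul _ hpdf
      ENNReal.measurable_ofReal,
    ← setLIntegral_eq_of_support_subset (s := Ioi 0) fun x hx => ?_,
    setLIntegral_congr_fun measurableSet_Ioi fun x (hx : 0 < x) => ?_,
    ← ofReal_integral_eq_lintegral_ofReal (Real.GammaIntegral_convergent two_pos) ?_,
    ← Real.Gamma_eq_integral two_pos, Real.Gamma_two, ENNReal.ofReal_one]
  · exact (ae_restrict_mem measurableSet_Ioi).mono fun x (hx : 0 < x) => by positivity
  · show gammaPDF 1 1 x * ENNReal.ofReal x = ENNReal.ofReal (Real.exp (-x) * x ^ ((2 : ℝ) - 1))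
    rw [gammaPDF_of_nonneg hx.le, ← ENNReal.ofReal_mul (by positivity)]
    norm_num [Real.Gamma_one, mul_comm]
  · by_contra hx0
    simp [ENNReal.ofReal_eq_zero.2 (not_lt.1 hx0)] at hx

theorem integrable_id_expMeasure_one : Integrable id (expMeasure 1) :=
  (lintegral_ofReal_ne_top_iff_integrable aestronglyMeasurable_id (ae_nonneg_expMeasure 1)).1
    (by simp [lintegral_ofReal_expMeasure_one])

theorem integral_id_expMeasure_one : ∫ x, x ∂expMeasure 1 = 1 := by
  rw [integral_eq_lintegral_of_nonneg_ae (ae_nonneg_expMeasure 1) aestronglyMeasurable_id]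
  simp [lintegral_ofReal_expMeasure_one]

theorem summable_sq_levyTailInv_of_poisson_arrivals_general
    {Ω : Type*} [MeasurableSpace Ω] (P : Measure Ω)
    (Λ : Measure ℝ)
    (htail : ∀ x : ℝ, 0 < x → Λ (Set.Ici x) < ⊤)
    (hmom : ∫⁻ x in Set.Ioi (0:ℝ), ENNReal.ofReal (x ^ 2) ∂Λ ≠ ⊤)
    (E : ℕ → Ω → ℝ) (hEmeas : ∀ i, Measurable (E i))
    (hElaw : ∀ i, Measure.map (E i) P = expMeasure 1)
    (hEindep : iIndepFun E P) :
    ∀ᵐ ω ∂P,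
      Summable fun n : ℕ =>
        (levyTailInv Λ (∑ i ∈ Finset.range (n + 1), E i ω)) ^ 2 := by
  have hlaw : ∀ i, IdentDistrib (E i) id P (expMeasure 1) := fun i =>
    ⟨(hEmeas i).aemeasurable, aemeasurable_id, by rw [hElaw i, Measure.map_id]⟩
  have hmean : P[E 0] = 1 := (hlaw 0).integral_eq.trans integral_id_expMeasure_one
  have hslln := strong_law_ae_real E ((hlaw 0).integrable_iff.2 integrable_id_expMeasure_one)
    (fun i j hij => hEindep.indepFun hij) fun i => (hlaw i).trans (hlaw 0).symm
  filter_upwards [hslln] with ω hω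
  rw [hmean] at hω
  exact summable_sq_levyTailInv_sum_range_of_tendsto Λ htail hmom one_pos hω

/-- If `Λ` is a measure on `(0, ∞)` with finite tails and a finite second moment, and
`Γ_n = E₁ + ⋯ + E_n` are arrival times of a standard Poisson process (the `Eᵢ` being
i.i.d. rate-one exponentials), then `∑_n (Λ⁻¹(Γ_n))² < ∞` almost surely. -/
theorem summable_sq_levyTailInv_of_poisson_arrivals
    {Ω : Type*} [MeasurableSpace Ω] (P : Measure Ω) [IsProbabilityMeasure P]
    (Λ : Measure ℝ) (hsupp : Λ (Set.Iic 0) = 0)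
    (htail : ∀ x : ℝ, 0 < x → Λ (Set.Ici x) < ⊤)
    (hmom : ∫⁻ x in Set.Ioi (0:ℝ), ENNReal.ofReal (x ^ 2) ∂Λ ≠ ⊤)
    (E : ℕ → Ω → ℝ) (hEmeas : ∀ i, Measurable (E i))
    (hElaw : ∀ i, Measure.map (E i) P = expMeasure 1)
    (hEindep : iIndepFun E P) :
    ∀ᵐ ω ∂P,
      Summable fun n : ℕ =>
        (levyTailInv Λ (∑ i ∈ Finset.range (n + 1), E i ω)) ^ 2 :=
  summable_sq_levyTailInv_of_poisson_arrivals_general P Λ htail hmom E hEmeas hElaw hEindep
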